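/- Let q(x,t) = (2t/(π² (t² − x²))) log(t/|x|). Then for all t > 0 and all x ∈ ℝ with x ≠ 0 and |x| ≠ t, q satisfies the non-homogeneous wave equation ∂²q/∂t² = ∂²q/∂x² − 2/(π² t x²). -/

import Mathlib

open Real Set
open Topology Filter

/-- Density of the iterated Cauchy process `I_C(t) = C¹(|C²(t)|)`:
`q(x,t) = (2t/(π²(t²−x²))) log(t/|x|)`. -/
noncomputable def iterCauchyDens (x t : ℝ) : ℝ :=
  (2 * t / (Real.pi ^ 2 * (t ^ 2 - x ^ 2))) * Real.log (t / |x|)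

/-- Explicit first time-partial of the density. -/
noncomputable def icPt (x τ : ℝ) : ℝ :=
  (2 / Real.pi ^ 2) * ((Real.log τ - Real.log x + 1) / (τ ^ 2 - x ^ 2)
    - 2 * τ ^ 2 * (Real.log τ - Real.log x) / (τ ^ 2 - x ^ 2) ^ 2)

/-- Explicit first space-partial of the density. -/
noncomputable def icPx (t y : ℝ) : ℝ :=
  (2 / Real.pi ^ 2) * (-t / (y * (t ^ 2 - y ^ 2))
    + 2 * y * t * (Real.log t - Real.log y) / (t ^ 2 - y ^ 2) ^ 2)

/-- Explicit second time-partial. -/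
noncomputable def icPtt (x t : ℝ) : ℝ :=
  (2 / Real.pi ^ 2) * (1 / (t * (t ^ 2 - x ^ 2))
    - (6 * t * (Real.log t - Real.log x) + 4 * t) / (t ^ 2 - x ^ 2) ^ 2
    + 8 * t ^ 3 * (Real.log t - Real.log x) / (t ^ 2 - x ^ 2) ^ 3)

/-- Explicit second space-partial. -/
noncomputable def icPxx (t x : ℝ) : ℝ :=
  (2 / Real.pi ^ 2) * (t / (x ^ 2 * (t ^ 2 - x ^ 2))
    - 4 * t / (t ^ 2 - x ^ 2) ^ 2
    + 2 * t * (Real.log t - Real.log x) / (t ^ 2 - x ^ 2) ^ 2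
    + 8 * x ^ 2 * t * (Real.log t - Real.log x) / (t ^ 2 - x ^ 2) ^ 3)

lemma ic_eq {x : ℝ} (hx : x ≠ 0) {τ : ℝ} (hτ : τ ≠ 0) :
    iterCauchyDens x τ
      = (2 * τ / (Real.pi ^ 2 * (τ ^ 2 - x ^ 2))) * (Real.log τ - Real.log x) := by
  unfold iterCauchyDens
  rw [Real.log_div hτ (abs_ne_zero.2 hx), Real.log_abs]

lemma icHt1 (x : ℝ) (hx : x ≠ 0) {τ : ℝ} (hτ : 0 < τ) (hv : τ ^ 2 - x ^ 2 ≠ 0) :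
    HasDerivAt (fun σ => iterCauchyDens x σ) (icPt x τ) τ := by
  have hπ : Real.pi ≠ 0 := Real.pi_ne_zero
  have hden : Real.pi ^ 2 * (τ ^ 2 - x ^ 2) ≠ 0 := mul_ne_zero (pow_ne_zero _ hπ) hv
  have h1 : HasDerivAt (fun σ : ℝ => 2 * σ) 2 τ := by
    simpa using (hasDerivAt_id τ).const_mul 2
  have h2 : HasDerivAt (fun σ : ℝ => Real.pi ^ 2 * (σ ^ 2 - x ^ 2))
      (Real.pi ^ 2 * (2 * τ)) τ := by
    simpa using ((hasDerivAt_pow 2 τ).sub_const (x ^ 2)).const_mul (Real.pi ^ 2)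
  have h4 : HasDerivAt (fun σ : ℝ => Real.log σ - Real.log x) τ⁻¹ τ :=
    (Real.hasDerivAt_log hτ.ne').sub_const _
  have h5 := (h1.fun_div h2 hden).fun_mul h4
  have h6 : HasDerivAt
      (fun σ => (2 * σ / (Real.pi ^ 2 * (σ ^ 2 - x ^ 2))) * (Real.log σ - Real.log x))
      (icPt x τ) τ := by
    refine h5.congr_deriv ?_
    unfold icPt
    field_simp
    ring
  refine h6.congr_of_eventuallyEq ?_
  filter_upwards [eventually_ne_nhds hτ.ne'] with σ hσ using ic_eq hx hσ

lemma icHt2 (x : ℝ) (hx : x ≠ 0) {t : ℝ} (ht : 0 < t) (hv : t ^ 2 - x ^ 2 ≠ 0) :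
    HasDerivAt (fun τ => icPt x τ) (icPtt x t) t := by
  have hlog : HasDerivAt (fun τ : ℝ => Real.log τ - Real.log x + 1) t⁻¹ t :=
    ((Real.hasDerivAt_log ht.ne').sub_const _).add_const 1
  have hv2 : HasDerivAt (fun τ : ℝ => τ ^ 2 - x ^ 2) (2 * t) t := by
    simpa using (hasDerivAt_pow 2 t).sub_const (x ^ 2)
  have term1 := hlog.fun_div hv2 hv
  have hnum2 : HasDerivAt (fun τ : ℝ => 2 * τ ^ 2 * (Real.log τ - Real.log x))
      ((2 * (2 * t)) * (Real.log t - Real.log x) + 2 * t ^ 2 * t⁻¹) t := by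
    have := (((hasDerivAt_pow 2 t).const_mul 2).fun_mul
      ((Real.hasDerivAt_log ht.ne').sub_const (Real.log x)))
    refine this.congr_deriv ?_
    ring
  have hden2 := hv2.fun_pow 2
  have term2 := hnum2.fun_div hden2 (pow_ne_zero 2 hv)
  have total := (term1.fun_sub term2).const_mul (2 / Real.pi ^ 2)
  have : HasDerivAt (fun τ => icPt x τ) (icPtt x t) t := by
    refine total.congr_deriv ?_
    unfold icPtt
    field_simp
    ring
  exact this

lemma icHx1 {t : ℝ} (ht : 0 < t) {y : ℝ} (hy : y ≠ 0) (hw : t ^ 2 - y ^ 2 ≠ 0) :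
    HasDerivAt (fun y' => iterCauchyDens y' t) (icPx t y) y := by
  have hπ : Real.pi ≠ 0 := Real.pi_ne_zero
  have hden : Real.pi ^ 2 * (t ^ 2 - y ^ 2) ≠ 0 := mul_ne_zero (pow_ne_zero _ hπ) hw
  have hc : HasDerivAt (fun _ : ℝ => 2 * t) 0 y := hasDerivAt_const _ _
  have hd : HasDerivAt (fun y' : ℝ => Real.pi ^ 2 * (t ^ 2 - y' ^ 2))
      (Real.pi ^ 2 * (-(2 * y))) y := by
    simpa using ((hasDerivAt_const y (t ^ 2)).sub (hasDerivAt_pow 2 y)).const_mul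
      (Real.pi ^ 2)
  have hh : HasDerivAt (fun y' : ℝ => Real.log t - Real.log y') (-y⁻¹) y := by
    simpa using (Real.hasDerivAt_log hy).const_sub (Real.log t)
  have h5 := (hc.fun_div hd hden).fun_mul hh
  have h6 : HasDerivAt
      (fun y' => (2 * t / (Real.pi ^ 2 * (t ^ 2 - y' ^ 2))) * (Real.log t - Real.log y'))
      (icPx t y) y := by
    refine h5.congr_deriv ?_
    unfold icPx
    field_simp
    ring
  refine h6.congr_of_eventuallyEq ?_
  filter_upwards [eventually_ne_nhds hy] with y' hy' using ic_eq hy' ht.ne'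

lemma icHx2 {t : ℝ} (ht : 0 < t) {x : ℝ} (hx : x ≠ 0) (hw : t ^ 2 - x ^ 2 ≠ 0) :
    HasDerivAt (fun y => icPx t y) (icPxx t x) x := by
  have hw2 : HasDerivAt (fun y : ℝ => t ^ 2 - y ^ 2) (-(2 * x)) x := by
    simpa using (hasDerivAt_const x (t ^ 2)).fun_sub (hasDerivAt_pow 2 x)
  have hd1 : HasDerivAt (fun y : ℝ => y * (t ^ 2 - y ^ 2))
      ((t ^ 2 - x ^ 2) + x * (-(2 * x))) x := by
    have := (hasDerivAt_id x).fun_mul hw2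
    refine this.congr_deriv ?_
    simp [id]
  have hd1ne : x * (t ^ 2 - x ^ 2) ≠ 0 := mul_ne_zero hx hw
  have term1 := (hasDerivAt_const x (-t)).fun_div hd1 hd1ne
  have hnum2 : HasDerivAt (fun y : ℝ => 2 * y * t * (Real.log t - Real.log y))
      (2 * t * (Real.log t - Real.log x) + 2 * x * t * (-x⁻¹)) x := by
    have h1 : HasDerivAt (fun y : ℝ => 2 * y * t) (2 * t) x := by
      have := ((hasDerivAt_id x).const_mul 2).mul_const t
      refine this.congr_deriv ?_
      simp [id]
    have h2 : HasDerivAt (fun y : ℝ => Real.log t - Real.log y) (-x⁻¹) x := by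
      simpa using (Real.hasDerivAt_log hx).const_sub (Real.log t)
    have := h1.fun_mul h2
    convert this using 1
  have hden2 := hw2.fun_pow 2
  have term2 := hnum2.fun_div hden2 (pow_ne_zero 2 hw)
  have total := (term1.fun_add term2).const_mul (2 / Real.pi ^ 2)
  have : HasDerivAt (fun y => icPx t y) (icPxx t x) x := by
    refine total.congr_deriv ?_
    unfold icPxx
    field_simp
    ring
  exact this

/-- For `t > 0`, `x ≠ 0`, `|x| ≠ t`, the density of the iterated Cauchy process
satisfies the non-homogeneous wave equation
`∂²q/∂t² = ∂²q/∂x² − 2/(π² t x²)`. -/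
theorem iterated_cauchy_wave_equation (t x : ℝ) (ht : 0 < t) (hx : x ≠ 0)
    (hxt : |x| ≠ t) :
    deriv (deriv (fun τ => iterCauchyDens x τ)) t
      = deriv (deriv (fun y => iterCauchyDens y t)) x
        - 2 / (Real.pi ^ 2 * t * x ^ 2) := by
  have hπ : Real.pi ≠ 0 := Real.pi_ne_zero
  have hv : t ^ 2 - x ^ 2 ≠ 0 := by
    intro h
    apply hxt
    have habs : |x| ^ 2 - t ^ 2 = 0 := by
      rw [sq_abs]; linarith
    have h2 : (|x| - t) * (|x| + t) = 0 := by linear_combination habs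
    have h3 := abs_nonneg x
    rcases mul_eq_zero.1 h2 with h4 | h4
    · linarith
    · linarith
  -- time side
  have hev1 : ∀ᶠ τ in 𝓝 t, 0 < τ := eventually_gt_nhds ht
  have hev2 : ∀ᶠ τ in 𝓝 t, τ ^ 2 - x ^ 2 ≠ 0 :=
    (((continuous_pow 2).sub continuous_const).continuousAt).eventually_ne hv
  have hevt : deriv (fun τ => iterCauchyDens x τ) =ᶠ[𝓝 t] fun τ => icPt x τ := by
    filter_upwards [hev1, hev2] with τ h1 h2 using (icHt1 x hx h1 h2).deriv
  have e1 : deriv (deriv (fun τ => iterCauchyDens x τ)) t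
      = deriv (fun τ => icPt x τ) t := hevt.deriv_eq
  -- space side
  have hev3 : ∀ᶠ y in 𝓝 x, y ≠ 0 := eventually_ne_nhds hx
  have hev4 : ∀ᶠ y in 𝓝 x, t ^ 2 - y ^ 2 ≠ 0 :=
    ((continuous_const.sub (continuous_pow 2)).continuousAt).eventually_ne hv
  have hevx : deriv (fun y => iterCauchyDens y t) =ᶠ[𝓝 x] fun y => icPx t y := by
    filter_upwards [hev3, hev4] with y h1 h2 using (icHx1 ht h1 h2).deriv
  have e2 : deriv (deriv (fun y => iterCauchyDens y t)) x
      = deriv (fun y => icPx t y) x := hevx.deriv_eq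
  rw [e1, e2, (icHt2 x hx ht hv).deriv, (icHx2 ht hx hv).deriv]
  unfold icPtt icPxx
  field_simp
  ring
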